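/- If W is a row-stochastic matrix such that for some m ≥ 1 every entry of W^m is at least δ > 0, then for all x the iterates x(k) = W^k x satisfy D(x(m·k)) ≤ (1 − δ)^k D(x(0)), where D(y) = max_i y_i − min_i y_i; hence x(k) converges to a consensus vector. -/
import Mathlib

open Matrix Filter

def RowStochastic {n : ℕ} (W : Matrix (Fin n) (Fin n) ℝ) : Prop :=
  (∀ i j, 0 ≤ W i j) ∧ ∀ i, ∑ j, W i j = 1

noncomputable def D {n : ℕ} (x : Fin n → ℝ) : ℝ := (⨆ i, x i) - ⨅ i, x i

lemma rs_mul {n : ℕ} {A B : Matrix (Fin n) (Fin n) ℝ} (hA : RowStochastic A)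
    (hB : RowStochastic B) : RowStochastic (A * B) := by
  constructor
  · intro i j
    rw [Matrix.mul_apply]
    exact Finset.sum_nonneg fun l _ => mul_nonneg (hA.1 i l) (hB.1 l j)
  · intro i
    simp only [Matrix.mul_apply]
    rw [Finset.sum_comm]
    calc ∑ l, ∑ j, A i l * B l j = ∑ l, A i l * ∑ j, B l j := by
          simp [Finset.mul_sum]
      _ = 1 := by simp [hB.2, hA.2 i]

lemma rs_pow {n : ℕ} {W : Matrix (Fin n) (Fin n) ℝ} (hW : RowStochastic W)
    (k : ℕ) : RowStochastic (W ^ k) := by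
  induction k with
  | zero =>
    constructor
    · intro i j; by_cases h : i = j <;> simp [Matrix.one_apply, h]
    · intro i; simp [Matrix.one_apply]
  | succ k ih =>
    rw [pow_succ]
    exact rs_mul ih hW

lemma mulVec_mem_bounds {n : ℕ} (hn : 0 < n) {A : Matrix (Fin n) (Fin n) ℝ}
    (hA : RowStochastic A) (x : Fin n → ℝ) (i : Fin n) :
    (⨅ j, x j) ≤ A.mulVec x i ∧ A.mulVec x i ≤ ⨆ j, x j := by
  haveI : Nonempty (Fin n) := ⟨⟨0, hn⟩⟩
  have hb : BddAbove (Set.range x) := Set.Finite.bddAbove (Set.finite_range x)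
  have hbb : BddBelow (Set.range x) := Set.Finite.bddBelow (Set.finite_range x)
  constructor
  · calc (⨅ j, x j) = ∑ j, A i j * (⨅ l, x l) := by
          rw [← Finset.sum_mul, hA.2 i, one_mul]
      _ ≤ ∑ j, A i j * x j :=
          Finset.sum_le_sum fun j _ => mul_le_mul_of_nonneg_left (ciInf_le hbb j) (hA.1 i j)
      _ = A.mulVec x i := rfl
  · calc A.mulVec x i = ∑ j, A i j * x j := rfl
      _ ≤ ∑ j, A i j * (⨆ l, x l) :=
          Finset.sum_le_sum fun j _ => mul_le_mul_of_nonneg_left (le_ciSup hb j) (hA.1 i j)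
      _ = ⨆ l, x l := by rw [← Finset.sum_mul, hA.2 i, one_mul]

lemma contraction {n : ℕ} (hn : 0 < n) {A : Matrix (Fin n) (Fin n) ℝ}
    (hA : RowStochastic A) {δ : ℝ} (hδ0 : 0 ≤ δ) (hAδ : ∀ i j, δ ≤ A i j)
    (x : Fin n → ℝ) : D (A.mulVec x) ≤ (1 - δ) * D x := by
  haveI : Nonempty (Fin n) := ⟨⟨0, hn⟩⟩
  set M := ⨆ j, x j with hM
  set μ := ⨅ j, x j with hμ
  have hb : BddAbove (Set.range x) := Set.Finite.bddAbove (Set.finite_range x)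
  have hbb : BddBelow (Set.range x) := Set.Finite.bddBelow (Set.finite_range x)
  have hμM : μ ≤ M := le_trans (ciInf_le hbb (Classical.arbitrary _)) (le_ciSup hb _)
  -- min attained
  obtain ⟨j0, hj0⟩ := Finite.exists_min x
  have hxj0 : x j0 = μ :=
    le_antisymm (le_ciInf hj0) (ciInf_le hbb j0)
  -- upper bound on each entry of A.mulVec x
  have hup : ∀ i, A.mulVec x i ≤ M - δ * (M - μ) := by
    intro i
    have key : ∑ j, A i j * (x j - M) ≤ δ * (μ - M) := by
      rw [← Finset.add_sum_erase _ _ (Finset.mem_univ j0)]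
      have h1 : A i j0 * (x j0 - M) ≤ δ * (μ - M) := by
        rw [hxj0]
        have := hAδ i j0
        nlinarith [sub_nonneg.mpr hμM]
      have h2 : ∑ j ∈ Finset.univ.erase j0, A i j * (x j - M) ≤ 0 := by
        apply Finset.sum_nonpos
        intro j _
        exact mul_nonpos_of_nonneg_of_nonpos (hA.1 i j) (by
          have := le_ciSup hb j; linarith)
      linarith
    have : A.mulVec x i = ∑ j, A i j * (x j - M) + M := by
      simp only [Matrix.mulVec, dotProduct, mul_sub, Finset.sum_sub_distrib,
        ← Finset.sum_mul, hA.2 i, one_mul]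
      ring
    rw [this]
    nlinarith
  have hlo : ∀ i, μ ≤ A.mulVec x i := fun i => (mulVec_mem_bounds hn hA x i).1
  have hsup : (⨆ i, A.mulVec x i) ≤ M - δ * (M - μ) := ciSup_le hup
  have hinf : μ ≤ ⨅ i, A.mulVec x i := le_ciInf hlo
  simp only [D, ← hM, ← hμ]
  nlinarith

theorem stmt_18 {n : ℕ} (W : Matrix (Fin n) (Fin n) ℝ) (hW : RowStochastic W)
    (m : ℕ) (hm : 1 ≤ m) (δ : ℝ) (hδ : 0 < δ)
    (hpos : ∀ i j, δ ≤ (W ^ m) i j) :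
    (∀ x : Fin n → ℝ, ∀ k : ℕ,
      D ((W ^ (m * k)).mulVec x) ≤ (1 - δ) ^ k * D x) ∧
    ∀ x : Fin n → ℝ, ∃ c : ℝ,
      Tendsto (fun k => (W ^ k).mulVec x) atTop (nhds (fun _ => c)) := by
  rcases Nat.eq_zero_or_pos n with hn | hn
  · subst hn
    haveI : IsEmpty (Fin 0) := inferInstance
    have hD : ∀ x : Fin 0 → ℝ, D x = 0 := by
      intro x
      simp [D, iSup, iInf, Set.range_eq_empty, Real.sSup_empty, Real.sInf_empty]
    constructor
    · intro x k
      rw [hD, hD, mul_zero]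
    · intro x
      refine ⟨0, ?_⟩
      have : (fun k => (W ^ k).mulVec x) = fun _ => (fun _ => (0:ℝ)) := by
        funext k i; exact absurd i.2 (by omega)
      rw [this]
      exact tendsto_const_nhds
  haveI : Nonempty (Fin n) := ⟨⟨0, hn⟩⟩
  have hδ1 : δ ≤ 1 := by
    have h1 := hpos ⟨0, hn⟩ ⟨0, hn⟩
    have h2 := (rs_pow hW m).2 ⟨0, hn⟩
    have h3 : (W ^ m) ⟨0, hn⟩ ⟨0, hn⟩ ≤ ∑ j, (W ^ m) ⟨0, hn⟩ j :=
      Finset.single_le_sum (fun j _ => (rs_pow hW m).1 _ j) (Finset.mem_univ _)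
    linarith
  have h1δ : 0 ≤ 1 - δ := by linarith
  have part1 : ∀ x : Fin n → ℝ, ∀ k : ℕ,
      D ((W ^ (m * k)).mulVec x) ≤ (1 - δ) ^ k * D x := by
    intro x k
    induction k with
    | zero => simp
    | succ k ih =>
      have heq : (W ^ (m * (k + 1))).mulVec x
          = (W ^ m).mulVec ((W ^ (m * k)).mulVec x) := by
        rw [Matrix.mulVec_mulVec, ← pow_add]
        ring_nf
      rw [heq]
      calc D ((W ^ m).mulVec ((W ^ (m * k)).mulVec x))
          ≤ (1 - δ) * D ((W ^ (m * k)).mulVec x) :=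
            contraction hn (rs_pow hW m) hδ.le hpos _
        _ ≤ (1 - δ) * ((1 - δ) ^ k * D x) := by
            exact mul_le_mul_of_nonneg_left ih h1δ
        _ = (1 - δ) ^ (k + 1) * D x := by ring
  refine ⟨part1, ?_⟩
  intro x
  set y : ℕ → Fin n → ℝ := fun k => (W ^ k).mulVec x with hy
  have hstep : ∀ k, y (k + 1) = W.mulVec (y k) := by
    intro k
    simp only [hy, Matrix.mulVec_mulVec, ← pow_succ']
  set Ms : ℕ → ℝ := fun k => ⨆ i, y k i with hMs
  set ms : ℕ → ℝ := fun k => ⨅ i, y k i with hms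
  have hManti : Antitone Ms := by
    apply antitone_nat_of_succ_le
    intro k
    rw [show Ms (k+1) = ⨆ i, y (k+1) i from rfl]
    apply ciSup_le
    intro i
    rw [hstep]
    exact (mulVec_mem_bounds hn hW (y k) i).2
  have hmmono : Monotone ms := by
    apply monotone_nat_of_le_succ
    intro k
    apply le_ciInf
    intro i
    rw [hstep]
    exact (mulVec_mem_bounds hn hW (y k) i).1
  have hmM : ∀ k, ms k ≤ Ms k := fun k =>
    le_trans (ciInf_le (Set.Finite.bddBelow (Set.finite_range _)) (Classical.arbitrary _))
      (le_ciSup (Set.Finite.bddAbove (Set.finite_range _)) _)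
  have hMbdd : BddBelow (Set.range Ms) := by
    refine ⟨ms 0, ?_⟩
    rintro _ ⟨k, rfl⟩
    exact le_trans (hmmono (Nat.zero_le k)) (hmM k)
  have hmbdd : BddAbove (Set.range ms) := by
    refine ⟨Ms 0, ?_⟩
    rintro _ ⟨k, rfl⟩
    exact le_trans (hmM k) (hManti (Nat.zero_le k))
  have hMtend : Tendsto Ms atTop (nhds (⨅ k, Ms k)) := tendsto_atTop_ciInf hManti hMbdd
  have hmtend : Tendsto ms atTop (nhds (⨆ k, ms k)) := tendsto_atTop_ciSup hmmono hmbdd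
  set c : ℝ := ⨅ k, Ms k with hc
  set c' : ℝ := ⨆ k, ms k with hc'
  -- D (y k) = Ms k - ms k, and D(y (m*k)) → 0
  have hDeq : ∀ k, D (y k) = Ms k - ms k := fun k => rfl
  have hDtend : Tendsto (fun k => D (y (m * k))) atTop (nhds (c - c')) := by
    have h1 : Tendsto (fun k => m * k) atTop atTop :=
      Tendsto.const_mul_atTop' (by omega) tendsto_id
    have h2 : Tendsto (fun k => Ms (m*k) - ms (m*k)) atTop (nhds (c - c')) :=
      Tendsto.sub (hMtend.comp h1) (hmtend.comp h1)
    simpa [hDeq] using h2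
  have hDzero : Tendsto (fun k => D (y (m * k))) atTop (nhds 0) := by
    apply squeeze_zero
    · intro k
      rw [hDeq]
      linarith [hmM (m*k)]
    · intro k
      simpa [Nat.mul_comm] using part1 x k
    · have : Tendsto (fun k : ℕ => (1 - δ) ^ k) atTop (nhds 0) := by
        apply tendsto_pow_atTop_nhds_zero_of_lt_one h1δ
        linarith
      simpa using this.mul_const (D x)
  have hcc : c = c' := by
    have := tendsto_nhds_unique hDtend hDzero
    linarith
  refine ⟨c, ?_⟩
  rw [tendsto_pi_nhds]
  intro i
  apply tendsto_of_tendsto_of_tendsto_of_le_of_le (hcc ▸ hmtend) hMtend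
  · intro k
    exact ciInf_le (Set.Finite.bddBelow (Set.finite_range _)) i
  · intro k
    exact le_ciSup (Set.Finite.bddAbove (Set.finite_range _)) i
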